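/- arXiv:1902.10767 — 5 statements merged into one kernel-verified Lean document; each statement's English description precedes it below -/
import Mathlib

section
/- Let H be a finite index set, and for each i ∈ H let U_i ∈ ℝ^{n_i×n} with ‖U_i‖ = 1 and b_i ∈ ℝ^{n_i}. Suppose x_k → x* in ℝ^n and ε_k → 0 with ε_k > 0. Then there exists k* ≥ 0 such that for all k ≥ k*, {i ∈ H : ‖U_i x_k − b_i‖ ≤ ε_k} ⊆ {i ∈ H : U_i x* = b_i}; consequently, R(x*) ⊆ R(x_k, ε_k) and W(x*) ⊆ W(x_k, ε_k) for all k ≥ k*. -/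
open scoped BigOperators

/-- if `x_k → x*` and `ε_k → 0` with `ε_k > 0`, then eventually
`C(x_k,ε_k) ⊆ C(x*)`, and consequently `R(x*) ⊆ R(x_k,ε_k)` and `W(x*) ⊆ W(x_k,ε_k)`. -/
theorem stmt2 (n : ℕ) {ι : Type*} (N H : Finset ι) (m : ι → ℕ)
    (U : ∀ i, EuclideanSpace ℝ (Fin n) →L[ℝ] EuclideanSpace ℝ (Fin (m i)))
    (b : ∀ i, EuclideanSpace ℝ (Fin (m i)))
    (hUnorm : ∀ i ∈ H, ‖U i‖ = 1)
    (x : ℕ → EuclideanSpace ℝ (Fin n)) (xstar : EuclideanSpace ℝ (Fin n))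
    (hx : Filter.Tendsto x Filter.atTop (nhds xstar))
    (ε : ℕ → ℝ) (hεpos : ∀ k, 0 < ε k)
    (hε : Filter.Tendsto ε Filter.atTop (nhds 0)) :
    ∃ kstar : ℕ, ∀ k ≥ kstar,
      (∀ i ∈ H, ‖U i (x k) - b i‖ ≤ ε k → U i xstar = b i) ∧
      ({d : EuclideanSpace ℝ (Fin n) | ∀ i ∈ H, U i xstar = b i → U i d = 0}
        ⊆ {d : EuclideanSpace ℝ (Fin n) | ∀ i ∈ H, ‖U i (x k) - b i‖ ≤ ε k → U i d = 0}) ∧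
      ((↑N ∪ {i | i ∈ H ∧ U i xstar ≠ b i} : Set ι)
        ⊆ (↑N ∪ {i | i ∈ H ∧ ε k < ‖U i (x k) - b i‖} : Set ι)) := by

  have key : ∀ᶠ k in Filter.atTop, ∀ i ∈ H, U i xstar ≠ b i → ε k < ‖U i (x k) - b i‖ := by
    rw [Filter.eventually_all_finset]
    intro i hi
    by_cases h : U i xstar = b i
    · filter_upwards with k hne; exact absurd h hne
    · have hnorm : Filter.Tendsto (fun k => ‖U i (x k) - b i‖) Filter.atTop
          (nhds ‖U i xstar - b i‖) := by
        exact ((((U i).continuous.tendsto xstar).comp hx).sub tendsto_const_nhds).norm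
      have hpos : 0 < ‖U i xstar - b i‖ := by
        rw [norm_pos_iff]; exact sub_ne_zero_of_ne h
      have hlt : Filter.Tendsto (fun k => ‖U i (x k) - b i‖ - ε k) Filter.atTop
          (nhds (‖U i xstar - b i‖ - 0)) := hnorm.sub hε
      have := hlt.eventually (eventually_gt_nhds (by linarith : (0:ℝ) < ‖U i xstar - b i‖ - 0))
      filter_upwards [this] with k hk _
      linarith
  obtain ⟨kstar, hk⟩ := Filter.eventually_atTop.mp key
  refine ⟨kstar, fun k hkk => ?_⟩
  have h1 : ∀ i ∈ H, ‖U i (x k) - b i‖ ≤ ε k → U i xstar = b i := by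
    intro i hi hle
    by_contra h
    exact absurd hle (not_le.mpr (hk k hkk i hi h))
  refine ⟨h1, ?_, ?_⟩
  · intro d hd i hi hle
    exact hd i hi (h1 i hi hle)
  · rintro i (hi | ⟨hiH, hne⟩)
    · exact Or.inl hi
    · exact Or.inr ⟨hiH, hk k hkk i hiH hne⟩
end

section
/- Let a ∈ (0,1), let p be an odd positive integer, let t > 0 and define μ(t,ζ) := t^a + Σ_{ℓ=1}^p (π(a−ℓ)/ℓ!) ζ^ℓ t^{a−ℓ}. Then for every ζ ≥ −t, μ(t,ζ) ≥ (t+ζ)^a. Equivalently, for r ≠ 0 and any s in ℝ^m, the isotropic model m(r,s) := μ(‖r‖, ‖r+s‖−‖r‖) satisfies m(r,s) ≥ ‖r+s‖^a. -/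
open scoped BigOperators

/-- `pifun a j` is `π(a−j) := a ∏_{i=1}^{j−1}(a−i)`. -/
noncomputable def pifun (a : ℝ) (j : ℕ) : ℝ := a * ∏ i ∈ Finset.Icc 1 (j - 1), (a - (i : ℝ))

/-- `mufun a p t ζ` is the degree-p Taylor polynomial in ζ of `(t+ζ)^a` around `ζ = 0`:
`μ(t,ζ) := t^a + Σ_{ℓ=1}^p (π(a−ℓ)/ℓ!) ζ^ℓ t^{a−ℓ}`. -/
noncomputable def mufun (a : ℝ) (p : ℕ) (t ζ : ℝ) : ℝ :=
  t ^ a + ∑ ℓ ∈ Finset.Icc 1 p, pifun a ℓ / (Nat.factorial ℓ : ℝ) * ζ ^ ℓ * t ^ (a - (ℓ : ℝ))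

/-!
Write `R_n(b, ζ) = (t + ζ)^b - μ_n(b, ζ)` for the remainder of the degree-`n` model with exponent
`b`. Since the coefficients `π(b-ℓ)/ℓ!` are those of the binomial series, `R_n(b, 0) = 0` and
`∂_ζ R_{n+1}(b, ζ) = b · R_n(b - 1, ζ)`. Induction on `n`, with the mean value theorem at each step,
gives the sign of the Lagrange remainder: `π(b-(n+1)) ζ^{n+1} R_n(b, ζ) ≥ 0` for `ζ > -t`.
For `a ∈ (0,1)` and `p` odd, `π(a-(p+1))` is a product of one positive and `p` negative factors,
and `ζ^{p+1} ≥ 0`, so `R_p(a, ζ) ≤ 0`; the endpoint `ζ = -t` follows by continuity.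
-/

open Finset Polynomial
open scoped Nat

theorem descPochhammer_succ_eval_left {R : Type*} [CommRing R] (r : R) (n : ℕ) :
    (descPochhammer R (n + 1)).eval r = r * (descPochhammer R n).eval (r - 1) := by
  simp [descPochhammer_succ_left]

theorem pifun_eq_descPochhammer_eval (b : ℝ) (n : ℕ) :
    pifun b (n + 1) = (descPochhammer ℝ (n + 1)).eval b := by
  induction n with
  | zero => simp [pifun]
  | succ n ih =>
    rw [descPochhammer_succ_eval, ← ih, pifun, pifun, Nat.add_sub_cancel, Nat.add_sub_cancel,
      prod_Icc_succ_top (by omega)]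
    push_cast
    ring

-- `pifun b 0 = b` rather than `1`, so the terms are written with `descPochhammer` to make the
-- constant term `t ^ b` of `mufun` the `ℓ = 0` instance.
noncomputable def binomialTerm (b t : ℝ) (ℓ : ℕ) (ζ : ℝ) : ℝ :=
  (descPochhammer ℝ ℓ).eval b / ℓ ! * ζ ^ ℓ * t ^ (b - ℓ)

theorem mufun_eq_sum_binomialTerm (b : ℝ) (n : ℕ) (t ζ : ℝ) :
    mufun b n t ζ = ∑ ℓ ∈ range (n + 1), binomialTerm b t ℓ ζ := by
  rw [sum_range_succ', mufun, add_comm, ← Ico_add_one_right_eq_Icc, sum_Ico_eq_sum_range,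
    Nat.add_sub_cancel]
  simp [binomialTerm, add_comm 1, pifun_eq_descPochhammer_eval]

theorem binomialTerm_zero (b t : ℝ) : binomialTerm b t 0 = fun _ => t ^ b := by
  ext
  simp [binomialTerm]

theorem hasDerivAt_binomialTerm_succ (b t : ℝ) (ℓ : ℕ) (ζ : ℝ) :
    HasDerivAt (binomialTerm b t (ℓ + 1)) (b * binomialTerm (b - 1) t ℓ ζ) ζ := by
  have := ((hasDerivAt_pow (ℓ + 1) ζ).const_mul
    ((descPochhammer ℝ (ℓ + 1)).eval b / (ℓ + 1)!)).mul_const (t ^ (b - (ℓ + 1 : ℕ)))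
  refine this.congr_deriv ?_
  rw [binomialTerm, descPochhammer_succ_eval_left, Nat.factorial_succ]
  push_cast
  rw [show b - (ℓ + 1) = b - 1 - ℓ by ring]
  field_simp

theorem hasDerivAt_mufun_succ (b : ℝ) (n : ℕ) (t ζ : ℝ) :
    HasDerivAt (mufun b (n + 1) t) (b * mufun (b - 1) n t ζ) ζ := by
  simp only [funext (mufun_eq_sum_binomialTerm b (n + 1) t), mufun_eq_sum_binomialTerm,
    sum_range_succ' _ (n + 1), binomialTerm_zero, mul_sum]
  exact (HasDerivAt.fun_sum fun ℓ _ => hasDerivAt_binomialTerm_succ b t ℓ ζ).add_const _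

theorem exists_mul_pos_hasDerivAt_eq_mul {g g' : ℝ → ℝ} {ζ : ℝ} (hζ : ζ ≠ 0)
    (hg : ∀ x ∈ Set.uIcc 0 ζ, HasDerivAt g (g' x) x) :
    ∃ ξ ∈ Set.uIcc 0 ζ, 0 < ξ * ζ ∧ g ζ - g 0 = g' ξ * ζ := by
  have hcont : ContinuousOn g (Set.uIcc 0 ζ) := fun x hx =>
    (hg x hx).continuousAt.continuousWithinAt
  rcases hζ.lt_or_gt with hneg | hpos
  · rw [Set.uIcc_of_ge hneg.le] at hg hcont
    obtain ⟨ξ, hξ, hslope⟩ := exists_hasDerivAt_eq_slope g g' hneg hcont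
      fun x hx => hg x (Set.Ioo_subset_Icc_self hx)
    refine ⟨ξ, Set.uIcc_of_ge hneg.le ▸ Set.Ioo_subset_Icc_self hξ,
      mul_pos_of_neg_of_neg hξ.2 hneg, ?_⟩
    rw [hslope]
    field_simp
    ring
  · rw [Set.uIcc_of_le hpos.le] at hg hcont
    obtain ⟨ξ, hξ, hslope⟩ := exists_hasDerivAt_eq_slope g g' hpos hcont
      fun x hx => hg x (Set.Ioo_subset_Icc_self hx)
    refine ⟨ξ, Set.uIcc_of_le hpos.le ▸ Set.Ioo_subset_Icc_self hξ, mul_pos hξ.1 hpos, ?_⟩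
    rw [hslope]
    field_simp
    ring

theorem mul_pow_succ_mul_nonneg_of_hasDerivAt {s : Set ℝ} (hs : s.OrdConnected) (h0 : 0 ∈ s)
    {g g' : ℝ → ℝ} (hg : ∀ x ∈ s, HasDerivAt g (g' x) x) (hg0 : g 0 = 0) {c : ℝ} {n : ℕ}
    (hsign : ∀ x ∈ s, 0 ≤ c * x ^ n * g' x) {ζ : ℝ} (hζ : ζ ∈ s) :
    0 ≤ c * ζ ^ (n + 1) * g ζ := by
  rcases eq_or_ne ζ 0 with rfl | hζ0
  · simp
  have hsub : Set.uIcc 0 ζ ⊆ s := hs.uIcc_subset h0 hζ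
  obtain ⟨ξ, hξ, hξζ, hmvt⟩ := exists_mul_pos_hasDerivAt_eq_mul hζ0 fun x hx => hg x (hsub hx)
  rw [hg0, sub_zero] at hmvt
  -- `ξ` lies strictly between `0` and `ζ`, so `ξ ^ n` and `ζ ^ n` have the same sign.
  have hfactor :
      c * ζ ^ (n + 1) * g ζ * (ξ * ζ) ^ n = (ζ ^ (n + 1)) ^ 2 * (c * ξ ^ n * g' ξ) := by
    rw [hmvt]; ring
  refine (mul_nonneg_iff_of_pos_right (pow_pos hξζ n)).mp ?_
  rw [hfactor]
  exact mul_nonneg (sq_nonneg _) (hsign ξ (hsub hξ))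

theorem hasDerivAt_const_add_rpow (b t : ℝ) {x : ℝ} (hx : 0 < t + x) :
    HasDerivAt (fun z => (t + z) ^ b) (b * (t + x) ^ (b - 1)) x := by
  simpa using ((hasDerivAt_id x).const_add t).rpow_const (p := b) (Or.inl hx.ne')

theorem mufun_zero_right (b : ℝ) (n : ℕ) (t : ℝ) : mufun b n t 0 = t ^ b := by
  rw [mufun, add_eq_left]
  refine sum_eq_zero fun ℓ hℓ => ?_
  rw [zero_pow (Nat.one_le_iff_ne_zero.mp (mem_Icc.mp hℓ).1)]
  ring

theorem descPochhammer_mul_pow_mul_sub_mufun_nonneg (n : ℕ) (b : ℝ) {t : ℝ} (ht : 0 < t) {ζ : ℝ}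
    (hζ : -t < ζ) :
    0 ≤ (descPochhammer ℝ (n + 1)).eval b * ζ ^ (n + 1) * ((t + ζ) ^ b - mufun b n t ζ) := by
  have hs : (Set.Ioi (-t)).OrdConnected := Set.ordConnected_Ioi
  have h0 : (0 : ℝ) ∈ Set.Ioi (-t) := neg_lt_zero.mpr ht
  have hpos : ∀ x ∈ Set.Ioi (-t), 0 < t + x := fun x hx => neg_lt_iff_pos_add'.mp hx
  have hg0 : ∀ b m, (t + 0) ^ b - mufun b m t 0 = 0 := by simp [mufun_zero_right]
  induction n generalizing b ζ with
  | zero =>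
    refine mul_pow_succ_mul_nonneg_of_hasDerivAt hs h0
      (g := fun x => (t + x) ^ b - mufun b 0 t x) (g' := fun x => b * (t + x) ^ (b - 1))
      (fun x hx => ?_) (hg0 b 0) (fun x hx => ?_) hζ
    · simpa [mufun] using hasDerivAt_const_add_rpow b t (hpos x hx)
    · refine (mul_nonneg (mul_self_nonneg b)
        (Real.rpow_nonneg (hpos x hx).le (b - 1))).trans_eq ?_
      rw [zero_add, descPochhammer_one, eval_X]
      ring
  | succ n ih =>
    refine mul_pow_succ_mul_nonneg_of_hasDerivAt hs h0
      (g := fun x => (t + x) ^ b - mufun b (n + 1) t x)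
      (g' := fun x => b * ((t + x) ^ (b - 1) - mufun (b - 1) n t x))
      (fun x hx => ?_) (hg0 b (n + 1)) (fun x hx => ?_) hζ
    · rw [mul_sub]
      exact (hasDerivAt_const_add_rpow b t (hpos x hx)).sub (hasDerivAt_mufun_succ b n t x)
    · refine (mul_nonneg (sq_nonneg b) (ih (b - 1) hx)).trans_eq ?_
      rw [descPochhammer_succ_eval_left b (n + 1)]
      ring

theorem neg_one_pow_mul_descPochhammer_eval_succ_pos {R : Type*} [CommRing R] [LinearOrder R]
    [IsStrictOrderedRing R] {a : R} (ha : a ∈ Set.Ioo 0 1) (n : ℕ) :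
    0 < (-1) ^ n * (descPochhammer R (n + 1)).eval a := by
  induction n with
  | zero => simpa using ha.1
  | succ n ih =>
    have : 0 < (n + 1 : R) - a := by linarith [ha.2]
    refine (mul_pos ih this).trans_eq ?_
    rw [descPochhammer_succ_eval (n + 1) a, pow_succ]
    push_cast
    ring

theorem descPochhammer_eval_succ_neg_of_odd {R : Type*} [CommRing R] [LinearOrder R]
    [IsStrictOrderedRing R] {a : R} (ha : a ∈ Set.Ioo 0 1) {p : ℕ} (hp : Odd p) :
    (descPochhammer R (p + 1)).eval a < 0 := by
  simpa [hp.neg_one_pow] using neg_one_pow_mul_descPochhammer_eval_succ_pos ha p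

theorem rpow_add_le_mufun_of_lt {a : ℝ} (ha : a ∈ Set.Ioo 0 1) {p : ℕ} (hp : Odd p) {t : ℝ}
    (ht : 0 < t) {ζ : ℝ} (hζ : -t < ζ) : (t + ζ) ^ a ≤ mufun a p t ζ := by
  rcases eq_or_ne ζ 0 with rfl | hζ0
  · rw [mufun_zero_right, add_zero]
  have hc : (descPochhammer ℝ (p + 1)).eval a * ζ ^ (p + 1) < 0 :=
    mul_neg_of_neg_of_pos (descPochhammer_eval_succ_neg_of_odd ha hp) (hp.add_one.pow_pos hζ0)
  have := nonpos_of_mul_nonneg_right (descPochhammer_mul_pow_mul_sub_mufun_nonneg p a ht hζ) hc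
  linarith

theorem rpow_add_le_mufun {a : ℝ} (ha : a ∈ Set.Ioo 0 1) {p : ℕ} (hp : Odd p) {t : ℝ}
    (ht : 0 < t) {ζ : ℝ} (hζ : -t ≤ ζ) : (t + ζ) ^ a ≤ mufun a p t ζ := by
  have hclosed : IsClosed {ζ : ℝ | (t + ζ) ^ a ≤ mufun a p t ζ} :=
    isClosed_le ((continuous_const.add continuous_id).rpow_const fun _ => Or.inr ha.1.le)
      (by unfold mufun; fun_prop)
  have hsub : Set.Ioi (-t) ⊆ {ζ : ℝ | (t + ζ) ^ a ≤ mufun a p t ζ} :=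
    fun _ h => rpow_add_le_mufun_of_lt ha hp ht h
  exact hclosed.closure_subset_iff.mpr hsub (closure_Ioi (-t) ▸ hζ)

theorem stmt6_general (a : ℝ) (ha : a ∈ Set.Ioo (0 : ℝ) 1) (p : ℕ) (hpodd : Odd p)
    (t : ℝ) (ht : 0 < t) :
    (∀ ζ : ℝ, -t ≤ ζ → (t + ζ) ^ a ≤ mufun a p t ζ) ∧
    (∀ (m : ℕ) (r s : EuclideanSpace ℝ (Fin m)), r ≠ 0 →
      ‖r + s‖ ^ a ≤ mufun a p ‖r‖ (‖r + s‖ - ‖r‖)) := by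
  refine ⟨fun ζ hζ => rpow_add_le_mufun ha hpodd ht hζ, fun m r s hr => ?_⟩
  have := rpow_add_le_mufun ha hpodd (norm_pos_iff.mpr hr) (ζ := ‖r + s‖ - ‖r‖)
    (by linarith [norm_nonneg (r + s)])
  rwa [add_sub_cancel] at this

/-- for odd `p` the model `μ` overestimates `(t+ζ)^a`, and consequently the
isotropic model `m(r,s) = μ(‖r‖, ‖r+s‖−‖r‖)` overestimates `‖r+s‖^a`. -/
theorem stmt6 (a : ℝ) (ha : a ∈ Set.Ioo (0 : ℝ) 1) (p : ℕ) (hpodd : Odd p) (hp : 1 ≤ p)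
    (t : ℝ) (ht : 0 < t) :
    (∀ ζ : ℝ, -t ≤ ζ → (t + ζ) ^ a ≤ mufun a p t ζ) ∧
    (∀ (m : ℕ) (r s : EuclideanSpace ℝ (Fin m)), r ≠ 0 →
      ‖r + s‖ ^ a ≤ mufun a p ‖r‖ (‖r + s‖ - ‖r‖)) :=
  stmt6_general a ha p hpodd t ht
end

section
/- Let a ∈ (0,1), let p be an odd positive integer, let t > 0 and define μ(t,ζ) := t^a + Σ_{ℓ=1}^p (π(a−ℓ)/ℓ!) ζ^ℓ t^{a−ℓ}. Then the function ζ ↦ μ(t,ζ) is concave on the interval [−t, 0]. -/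
open scoped BigOperators

/-! For `0 ≤ a ≤ 1` the coefficient `π(a−ℓ)` has the sign `(-1)^(ℓ+1)` of the `ℓ`-th derivative
of `x ↦ x^a`, while `ζ^ℓ` has sign `(-1)^ℓ` on `ζ ≤ 0`. Hence every monomial of `μ(t, ·)` is, on
`ζ ≤ 0`, a nonpositive multiple of the convex function `ζ ↦ (-ζ)^ℓ`, so it is concave there, and
so is their sum. -/

lemma neg_one_pow_succ_mul_pifun_nonneg {a : ℝ} (ha₀ : 0 ≤ a) (ha₁ : a ≤ 1) {n : ℕ}
    (hn : 1 ≤ n) : 0 ≤ (-1) ^ (n + 1) * pifun a n := by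
  obtain ⟨m, rfl⟩ := Nat.exists_eq_add_of_le' hn
  have hsign : (-1 : ℝ) ^ (m + 1 + 1) * pifun a (m + 1)
      = a * ∏ i ∈ Finset.Icc 1 m, ((i : ℝ) - a) := by
    have hsq : (-1 : ℝ) ^ m * (-1) ^ m = 1 := by rw [← mul_pow]; norm_num
    simp only [pifun, ← neg_sub _ a, Finset.prod_neg, Nat.card_Icc, Nat.add_sub_cancel]
    linear_combination (a * ∏ i ∈ Finset.Icc 1 m, ((i : ℝ) - a)) * hsq
  rw [hsign]
  refine mul_nonneg ha₀ (Finset.prod_nonneg fun i hi => ?_)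
  have : (1 : ℝ) ≤ i := by exact_mod_cast (Finset.mem_Icc.mp hi).1
  linarith

lemma concaveOn_mul_pow_Iic {c : ℝ} {n : ℕ} (hc : 0 ≤ (-1) ^ (n + 1) * c) :
    ConcaveOn ℝ (Set.Iic 0) fun x : ℝ => c * x ^ n := by
  have hconvex : ConvexOn ℝ (Set.Iic 0) fun x : ℝ => (-x) ^ n := by
    have h := (convexOn_pow n).comp_affineMap (-AffineMap.id ℝ ℝ)
    rwa [show ⇑(-AffineMap.id ℝ ℝ) ⁻¹' Set.Ici 0 = Set.Iic 0 by ext; simp] at h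
  have hcoeff : (-1) ^ n * c ≤ 0 := by rw [pow_succ] at hc; linarith
  have hsq : (-1 : ℝ) ^ n * (-1) ^ n = 1 := by rw [← mul_pow]; norm_num
  refine (hconvex.smul (neg_nonneg.mpr hcoeff)).neg.congr fun x _ => ?_
  simp only [Pi.neg_apply, smul_eq_mul, neg_pow x]
  linear_combination (c * x ^ n) * hsq

lemma concaveOn_finset_sum {ι : Type*} {s : Set ℝ} (hs : Convex ℝ s) {F : Finset ι}
    {f : ι → ℝ → ℝ} (hf : ∀ i ∈ F, ConcaveOn ℝ s (f i)) :
    ConcaveOn ℝ s fun x => ∑ i ∈ F, f i x := by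
  simp_rw [← Finset.sum_apply]
  exact Finset.sum_induction f (ConcaveOn ℝ s) (fun _ _ => ConcaveOn.add)
    (concaveOn_const 0 hs) hf

lemma concaveOn_mufun_Iic {a : ℝ} (ha₀ : 0 ≤ a) (ha₁ : a ≤ 1) (p : ℕ) {t : ℝ} (ht : 0 ≤ t) :
    ConcaveOn ℝ (Set.Iic 0) fun ζ => mufun a p t ζ := by
  refine (concaveOn_const _ (convex_Iic 0)).add
    (concaveOn_finset_sum (convex_Iic 0) fun ℓ hℓ => ?_)
  have hmonomial : (fun ζ : ℝ => pifun a ℓ / ℓ.factorial * ζ ^ ℓ * t ^ (a - ℓ))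
      = fun ζ => pifun a ℓ / ℓ.factorial * t ^ (a - ℓ) * ζ ^ ℓ := by
    ext ζ; ring
  rw [hmonomial]
  refine concaveOn_mul_pow_Iic ?_
  rw [← mul_assoc, mul_div_assoc']
  exact mul_nonneg
    (div_nonneg (neg_one_pow_succ_mul_pifun_nonneg ha₀ ha₁ (Finset.mem_Icc.mp hℓ).1)
      (Nat.cast_nonneg _))
    (Real.rpow_nonneg ht _)

theorem stmt8_general (a : ℝ) (ha : a ∈ Set.Ioo (0 : ℝ) 1) (p : ℕ)
    (t : ℝ) (ht : 0 < t) :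
    ConcaveOn ℝ (Set.Icc (-t) (0 : ℝ)) (fun ζ => mufun a p t ζ) :=
  (concaveOn_mufun_Iic ha.1.le ha.2.le p ht.le).subset (fun _ hζ => hζ.2) (convex_Icc _ _)

/-- for odd `p` the function `ζ ↦ μ(t,ζ)` is concave on `[−t,0]`. -/
theorem stmt8 (a : ℝ) (ha : a ∈ Set.Ioo (0 : ℝ) 1) (p : ℕ) (hpodd : Odd p)
    (t : ℝ) (ht : 0 < t) :
    ConcaveOn ℝ (Set.Icc (-t) (0 : ℝ)) (fun ζ => mufun a p t ζ) :=
  stmt8_general a ha p t ht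
end

section
/- Let N and H be disjoint finite index sets, a ∈ (0,1), and for each i let U_i ∈ ℝ^{n_i×n} with ‖U_i‖ = 1 and b_i ∈ ℝ^{n_i}; let f(x) = Σ_{i∈N} f_i(U_i x) + Σ_{i∈H} ‖U_i x − b_i‖^a. For ε > 0, x ∈ ℝ^n and every d ∈ R(x,ε) := ∩_{i∈C(x,ε)} ker(U_i), one has f_{W(x,ε)}(x+d) ≤ f(x+d) ≤ f_{W(x,ε)}(x+d) + ε^a |H|, where C(x,ε) = {i ∈ H : ‖U_i x − b_i‖ ≤ ε}, W(x,ε) = N ∪ (H∖C(x,ε)) and f_W(y) = Σ_{i∈W} f_i(U_i y) with f_i(U_i y) = ‖U_i y − b_i‖^a for i ∈ H. -/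
open scoped BigOperators Classical

/-! The sandwich holds term by term. The reduced objective only drops the terms `i ∈ C(x,ε)`,
which are nonnegative; and for such `i` the direction `d ∈ ker U_i` leaves `U_i (x + d) = U_i x`,
so the dropped term equals `‖U_i x - b_i‖ ^ a ≤ ε ^ a`. -/

namespace Finset

variable {ι M : Type*} [AddCommMonoid M] [PartialOrder M] [IsOrderedAddMonoid M]
  {s : Finset ι} {p : ι → Prop} [DecidablePred p] {g : ι → M}

theorem sum_ite_zero_le_sum (hg : ∀ i ∈ s, ¬p i → 0 ≤ g i) :
    ∑ i ∈ s, (if p i then g i else 0) ≤ ∑ i ∈ s, g i :=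
  sum_le_sum fun i hi => by
    split_ifs with h
    · exact le_rfl
    · exact hg i hi h

theorem sum_le_sum_ite_zero_add_card_nsmul {c : M} (hc : 0 ≤ c) (hg : ∀ i ∈ s, ¬p i → g i ≤ c) :
    ∑ i ∈ s, g i ≤ ∑ i ∈ s, (if p i then g i else 0) + s.card • c := by
  rw [← sum_const, ← sum_add_distrib]
  refine sum_le_sum fun i hi => ?_
  split_ifs with h
  · exact le_add_of_nonneg_right hc
  · rw [zero_add]
    exact hg i hi h

end Finset

theorem rpow_norm_map_add_sub_le {E F : Type*} [NormedAddCommGroup E] [NormedAddCommGroup F]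
    [NormedSpace ℝ E] [NormedSpace ℝ F] (U : E →L[ℝ] F) {x d : E} {b : F} {ε a : ℝ}
    (ha : 0 ≤ a) (hx : ‖U x - b‖ ≤ ε) (hd : U d = 0) :
    ‖U (x + d) - b‖ ^ a ≤ ε ^ a := by
  rw [map_add, hd, add_zero]
  exact Real.rpow_le_rpow (norm_nonneg _) hx ha

theorem stmt10_general (n : ℕ) {ι : Type*} (N H : Finset ι) (m : ι → ℕ)
    (U : ∀ i, EuclideanSpace ℝ (Fin n) →L[ℝ] EuclideanSpace ℝ (Fin (m i)))
    (b : ∀ i, EuclideanSpace ℝ (Fin (m i)))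
    (φ : ∀ i, EuclideanSpace ℝ (Fin (m i)) → ℝ)
    (a : ℝ) (ha : a ∈ Set.Ioo (0 : ℝ) 1)
    (ε : ℝ) (hε : 0 < ε)
    (x d : EuclideanSpace ℝ (Fin n))
    (hd : ∀ i ∈ H, ‖U i x - b i‖ ≤ ε → U i d = 0) :
    (∑ i ∈ N, φ i (U i (x + d))
        + ∑ i ∈ H, (if ε < ‖U i x - b i‖ then ‖U i (x + d) - b i‖ ^ a else 0)
      ≤ ∑ i ∈ N, φ i (U i (x + d)) + ∑ i ∈ H, ‖U i (x + d) - b i‖ ^ a) ∧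
    (∑ i ∈ N, φ i (U i (x + d)) + ∑ i ∈ H, ‖U i (x + d) - b i‖ ^ a
      ≤ (∑ i ∈ N, φ i (U i (x + d))
          + ∑ i ∈ H, (if ε < ‖U i x - b i‖ then ‖U i (x + d) - b i‖ ^ a else 0))
        + ε ^ a * H.card) := by
  refine ⟨add_le_add_right (Finset.sum_ite_zero_le_sum fun i _ _ => by positivity) _, ?_⟩
  have hdropped : ∀ i ∈ H, ¬ε < ‖U i x - b i‖ → ‖U i (x + d) - b i‖ ^ a ≤ ε ^ a :=
    fun i hi hx => rpow_norm_map_add_sub_le (U i) ha.1.le (not_lt.1 hx) (hd i hi (not_lt.1 hx))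
  have hsum := Finset.sum_le_sum_ite_zero_add_card_nsmul (by positivity) hdropped
  rw [nsmul_eq_mul, mul_comm] at hsum
  rw [add_assoc]
  exact add_le_add_right hsum _

/-- for `d ∈ R(x,ε)`, the reduced objective `f_{W(x,ε)}` sandwiches `f`:
`f_{W(x,ε)}(x+d) ≤ f(x+d) ≤ f_{W(x,ε)}(x+d) + ε^a |H|`. -/
theorem stmt10 (n : ℕ) {ι : Type*} (N H : Finset ι) (hNH : Disjoint N H) (m : ι → ℕ)
    (U : ∀ i, EuclideanSpace ℝ (Fin n) →L[ℝ] EuclideanSpace ℝ (Fin (m i)))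
    (b : ∀ i, EuclideanSpace ℝ (Fin (m i)))
    (φ : ∀ i, EuclideanSpace ℝ (Fin (m i)) → ℝ)
    (a : ℝ) (ha : a ∈ Set.Ioo (0 : ℝ) 1)
    (hUnorm : ∀ i ∈ N ∪ H, ‖U i‖ = 1)
    (ε : ℝ) (hε : 0 < ε)
    (x d : EuclideanSpace ℝ (Fin n))
    (hd : ∀ i ∈ H, ‖U i x - b i‖ ≤ ε → U i d = 0) :
    (∑ i ∈ N, φ i (U i (x + d))
        + ∑ i ∈ H, (if ε < ‖U i x - b i‖ then ‖U i (x + d) - b i‖ ^ a else 0)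
      ≤ ∑ i ∈ N, φ i (U i (x + d)) + ∑ i ∈ H, ‖U i (x + d) - b i‖ ^ a) ∧
    (∑ i ∈ N, φ i (U i (x + d)) + ∑ i ∈ H, ‖U i (x + d) - b i‖ ^ a
      ≤ (∑ i ∈ N, φ i (U i (x + d))
          + ∑ i ∈ H, (if ε < ‖U i x - b i‖ then ‖U i (x + d) - b i‖ ^ a else 0))
        + ε ^ a * H.card) :=
  stmt10_general n N H m U b φ a ha ε hε x d hd
end

section
/- Let N be a finite index set, 0 < γ₀ < 1 < γ₁, and 0 < σ_min ≤ σ_max. Let {0,…,k} be partitioned into 'successful' iterations S_k and 'unsuccessful' iterations U_k, and for each i ∈ N let (σ_{i,j})_{j≥0} be reals with σ_{i,j} ∈ [σ_min, σ_max] for all j, such that: for each unsuccessful j, σ_{i,j+1} ≥ σ_{i,j} for all i and there exists i ∈ N with σ_{i,j+1} ≥ γ₁ σ_{i,j}; and for each successful j, σ_{i,j+1} ≥ γ₀ σ_{i,j} for all i. Then k ≤ κ^a |S_k| + κ^b, where κ^a = 1 + |N| |log γ₀| / log γ₁ and κ^b = (|N| / log γ₁) log(σ_max/σ_min). -/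
open scoped BigOperators

/-- counting lemma bounding the total number of iterations in terms of the
number of successful ones, for an adaptive-regularization parameter update scheme. -/
theorem stmt13 {ι : Type*} (N : Finset ι)
    (γ₀ γ₁ : ℝ) (hγ₀ : 0 < γ₀) (hγ₀1 : γ₀ < 1) (hγ₁ : 1 < γ₁)
    (σmin σmax : ℝ) (hσmin : 0 < σmin) (hσ : σmin ≤ σmax)
    (k : ℕ) (success : ℕ → Prop) [DecidablePred success]
    (σ : ι → ℕ → ℝ)
    (hrange : ∀ i ∈ N, ∀ j : ℕ, σ i j ∈ Set.Icc σmin σmax)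
    (hunsucc : ∀ j ∈ Finset.range (k + 1), ¬ success j →
      (∀ i ∈ N, σ i j ≤ σ i (j + 1)) ∧ ∃ i ∈ N, γ₁ * σ i j ≤ σ i (j + 1))
    (hsucc : ∀ j ∈ Finset.range (k + 1), success j →
      ∀ i ∈ N, γ₀ * σ i j ≤ σ i (j + 1)) :
    (k : ℝ) ≤ (1 + (N.card : ℝ) * |Real.log γ₀| / Real.log γ₁)
        * ((Finset.range (k + 1)).filter success).card
      + (N.card : ℝ) / Real.log γ₁ * Real.log (σmax / σmin) := by
  have hlogγ₁ : 0 < Real.log γ₁ := Real.log_pos hγ₁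
  have hlogγ₀ : Real.log γ₀ < 0 := Real.log_neg hγ₀ hγ₀1
  have habs : |Real.log γ₀| = -Real.log γ₀ := abs_of_neg hlogγ₀
  have hσpos : ∀ i ∈ N, ∀ j : ℕ, 0 < σ i j := fun i hi j =>
    lt_of_lt_of_le hσmin (hrange i hi j).1
  -- per-step lower bound
  have key : ∀ j ∈ Finset.range (k+1),
      (if success j then (N.card : ℝ) * Real.log γ₀ else Real.log γ₁)
        ≤ ∑ i ∈ N, (Real.log (σ i (j+1)) - Real.log (σ i j)) := by
    intro j hj
    by_cases h : success j
    · simp only [if_pos h]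
      have hle : ∀ i ∈ N, Real.log γ₀ ≤ Real.log (σ i (j+1)) - Real.log (σ i j) := by
        intro i hi
        have h1 : γ₀ * σ i j ≤ σ i (j+1) := hsucc j hj h i hi
        have h2 : Real.log (γ₀ * σ i j) ≤ Real.log (σ i (j+1)) :=
          Real.log_le_log (mul_pos hγ₀ (hσpos i hi j)) h1
        rw [Real.log_mul (ne_of_gt hγ₀) (ne_of_gt (hσpos i hi j))] at h2
        linarith
      calc (N.card : ℝ) * Real.log γ₀ = ∑ _i ∈ N, Real.log γ₀ := by
            rw [Finset.sum_const, nsmul_eq_mul]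
        _ ≤ _ := Finset.sum_le_sum hle
    · simp only [if_neg h]
      obtain ⟨hmono, i₀, hi₀, hineq⟩ := hunsucc j hj h
      have hnn : ∀ i ∈ N, 0 ≤ Real.log (σ i (j+1)) - Real.log (σ i j) := by
        intro i hi
        have := Real.log_le_log (hσpos i hi j) (hmono i hi)
        linarith
      have hterm : Real.log γ₁ ≤ Real.log (σ i₀ (j+1)) - Real.log (σ i₀ j) := by
        have h2 : Real.log (γ₁ * σ i₀ j) ≤ Real.log (σ i₀ (j+1)) :=
          Real.log_le_log (mul_pos (lt_trans one_pos hγ₁) (hσpos i₀ hi₀ j)) hineq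
        rw [Real.log_mul (by positivity) (ne_of_gt (hσpos i₀ hi₀ j))] at h2
        linarith
      exact hterm.trans (Finset.single_le_sum hnn hi₀)
  -- telescoping sum
  have sum_eq : ∑ j ∈ Finset.range (k+1), ∑ i ∈ N, (Real.log (σ i (j+1)) - Real.log (σ i j))
      = ∑ i ∈ N, (Real.log (σ i (k+1)) - Real.log (σ i 0)) := by
    rw [Finset.sum_comm]
    exact Finset.sum_congr rfl fun i _ => Finset.sum_range_sub (fun j => Real.log (σ i j)) _
  -- upper bound on the telescoped sum
  have hub : ∑ i ∈ N, (Real.log (σ i (k+1)) - Real.log (σ i 0))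
      ≤ (N.card : ℝ) * (Real.log σmax - Real.log σmin) := by
    calc ∑ i ∈ N, (Real.log (σ i (k+1)) - Real.log (σ i 0))
        ≤ ∑ _i ∈ N, (Real.log σmax - Real.log σmin) := by
          apply Finset.sum_le_sum
          intro i hi
          have h1 : Real.log (σ i (k+1)) ≤ Real.log σmax :=
            Real.log_le_log (hσpos i hi (k+1)) (hrange i hi (k+1)).2
          have h2 : Real.log σmin ≤ Real.log (σ i 0) :=
            Real.log_le_log hσmin (hrange i hi 0).1
          linarith
      _ = (N.card : ℝ) * (Real.log σmax - Real.log σmin) := by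
          rw [Finset.sum_const, nsmul_eq_mul]
  -- split the range sum
  set Sc := ((Finset.range (k+1)).filter success).card with hSc
  set Uc := ((Finset.range (k+1)).filter (fun j => ¬ success j)).card with hUc
  have hsplit : (Sc : ℝ) * ((N.card : ℝ) * Real.log γ₀) + (Uc : ℝ) * Real.log γ₁
      ≤ ∑ j ∈ Finset.range (k+1), ∑ i ∈ N, (Real.log (σ i (j+1)) - Real.log (σ i j)) := by
    have := Finset.sum_le_sum key
    rwa [Finset.sum_ite, Finset.sum_const, Finset.sum_const, nsmul_eq_mul, nsmul_eq_mul] at this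
  have hcard : Sc + Uc = k + 1 := by
    rw [hSc, hUc, Finset.card_filter_add_card_filter_not, Finset.card_range]
  have hcardR : (Sc : ℝ) + (Uc : ℝ) = (k : ℝ) + 1 := by exact_mod_cast hcard
  have hmain : (Uc : ℝ) * Real.log γ₁
      ≤ (N.card : ℝ) * (Real.log σmax - Real.log σmin) - (Sc : ℝ) * ((N.card : ℝ) * Real.log γ₀) := by
    linarith [hsplit.trans (sum_eq ▸ hub)]
  rw [habs, Real.log_div (ne_of_gt (lt_of_lt_of_le hσmin hσ)) (ne_of_gt hσmin)]
  rw [show (1 + (N.card : ℝ) * (-Real.log γ₀) / Real.log γ₁) * (Sc : ℝ)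
      + (N.card : ℝ) / Real.log γ₁ * (Real.log σmax - Real.log σmin)
      = ((Real.log γ₁ + (N.card : ℝ) * (-Real.log γ₀)) * Sc
        + (N.card : ℝ) * (Real.log σmax - Real.log σmin)) / Real.log γ₁ from by
    field_simp]
  rw [le_div_iff₀ hlogγ₁]
  nlinarith [hmain, hcardR, hlogγ₁]
end
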